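/- Let R be a ring, Γ a finite group whose order is invertible in R, A a strongly Γ-graded ring with base ring R, and M a module over A. Then M is projective over A if and only if M is projective over R (i.e. over the subring A_e = A({e}), by restriction of scalars). -/

import Mathlib

open Pointwise

/-- `𝒜` is a strongly `Γ`-graded ring structure on the ring `A`:  `A` is the internal direct
sum of the additive subgroups `𝒜 g` (`g ∈ Γ`), and `A_g · A_h = A_{g·h}` for all `g h : Γ`
(the inclusion `A_g · A_h ⊆ A_{g·h}` is the field `mul_mem`; the reverse inclusion, saying the
grading is *strong*, is the field `strong`). -/
structure IsStronglyGraded {Γ : Type*} [Group Γ] {A : Type*} [Ring A]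
    (𝒜 : Γ → AddSubgroup A) : Prop where
  independent : iSupIndep 𝒜
  iSup_eq_top : ⨆ g, 𝒜 g = ⊤
  one_mem : (1 : A) ∈ 𝒜 1
  mul_mem : ∀ {g h : Γ} {a b : A}, a ∈ 𝒜 g → b ∈ 𝒜 h → a * b ∈ 𝒜 (g * h)
  strong : ∀ g h : Γ, (𝒜 (g * h) : Set A) ⊆
    (AddSubgroup.closure ((𝒜 g : Set A) * (𝒜 h : Set A)) : Set A)

/-- For a subgroup `U ≤ Γ`, the subring `A(U) = ⊕_{u ∈ U} A_u` of `A`.  (For a graded ring, the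
additive subgroup `⊕_{u ∈ U} A_u` is a subring, and it coincides with the subring of `A`
generated by the pieces `𝒜 u`, `u ∈ U`, which is how we realize it here.)  Every `A`-module is
a module over this subring by restriction of scalars.  In particular `gradedSubring 𝒜 ⊥` is the
base ring `A_e` of the graded ring. -/
def gradedSubring {Γ : Type*} [Group Γ] {A : Type*} [Ring A]
    (𝒜 : Γ → AddSubgroup A) (U : Subgroup Γ) : Subring A :=
  Subring.closure (⋃ u ∈ U, (𝒜 u : Set A))


set_option synthInstance.maxHeartbeats 1000000
set_option maxHeartbeats 1000000

private lemma aux_mem_closure_mul {A : Type*} [Ring A] {S T : AddSubgroup A} {x : A}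
    (hx : x ∈ AddSubgroup.closure ((S : Set A) * (T : Set A))) :
    ∃ (n : ℕ) (c d : Fin n → A), (∀ i, c i ∈ S) ∧ (∀ i, d i ∈ T) ∧ ∑ i, c i * d i = x := by
  induction hx using AddSubgroup.closure_induction with
  | mem z hz =>
    obtain ⟨s, hs, t, ht, rfl⟩ := hz
    exact ⟨1, fun _ => s, fun _ => t, fun _ => hs, fun _ => ht, by simp⟩
  | zero => exact ⟨0, Fin.elim0, Fin.elim0, fun i => i.elim0, fun i => i.elim0, by simp⟩
  | add x y hx hy ihx ihy =>
    obtain ⟨n₁, c₁, d₁, hc₁, hd₁, h₁⟩ := ihx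
    obtain ⟨n₂, c₂, d₂, hc₂, hd₂, h₂⟩ := ihy
    refine ⟨n₁ + n₂, Fin.addCases c₁ c₂, Fin.addCases d₁ d₂, ?_, ?_, ?_⟩
    · exact fun i => Fin.addCases (fun j => by simpa using hc₁ j) (fun j => by simpa using hc₂ j) i
    · exact fun i => Fin.addCases (fun j => by simpa using hd₁ j) (fun j => by simpa using hd₂ j) i
    · rw [Fin.sum_univ_add]
      simp [h₁, h₂]
  | neg x hx ih =>
    obtain ⟨n, c, d, hc, hd, h⟩ := ih
    exact ⟨n, fun i => -c i, d, fun i => neg_mem (hc i), hd, by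
      simp only [neg_mul, Finset.sum_neg_distrib, h]⟩

private lemma aux_projective_of_dualBasis {R M : Type*} [Ring R] [AddCommGroup M] [Module R M]
    {ι : Type*} [Fintype ι] (a : ι → M) (f : ι → (M →ₗ[R] R))
    (h : ∀ x, ∑ i, f i x • a i = x) : Module.Projective R M := by
  apply Module.Projective.of_split (M := ι →₀ R)
    (∑ i : ι, (Finsupp.lsingle i) ∘ₗ (f i)) (Finsupp.linearCombination R a)
  ext x
  simp [LinearMap.sum_apply, map_sum, Finsupp.linearCombination_single, h x]

private lemma aux_projective_finsupp {R M : Type*} [Ring R] [AddCommGroup M] [Module R M]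
    (ι : Type*) [Module.Projective R M] : Module.Projective R (ι →₀ M) := by
  obtain ⟨s, hs⟩ := Module.projective_def.mp ‹Module.Projective R M›
  refine Module.Projective.of_split (M := ι →₀ (M →₀ R))
    (Finsupp.mapRange.linearMap s) (Finsupp.mapRange.linearMap (Finsupp.linearCombination R id)) ?_
  apply LinearMap.ext; intro z
  ext i
  exact hs (z i)

section Aux

variable {Γ : Type*} [Group Γ] {A : Type*} [Ring A] {𝒜 : Γ → AddSubgroup A}

private lemma aux_mem_base (hA : IsStronglyGraded 𝒜) {x : A} :
    x ∈ gradedSubring 𝒜 ⊥ ↔ x ∈ 𝒜 1 := by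
  let S : Subring A :=
    { carrier := 𝒜 1
      one_mem' := hA.one_mem
      mul_mem' := fun {a b} ha hb => by simpa using hA.mul_mem ha hb
      add_mem' := fun ha hb => add_mem ha hb
      zero_mem' := zero_mem _
      neg_mem' := fun ha => neg_mem ha }
  have hU : (⋃ u ∈ (⊥ : Subgroup Γ), (𝒜 u : Set A)) = (S : Set A) := by
    ext y
    simp only [Subgroup.mem_bot, Set.mem_iUnion]
    constructor
    · rintro ⟨u, rfl, hy⟩; exact hy
    · intro hy; exact ⟨1, rfl, hy⟩
  have : gradedSubring 𝒜 ⊥ = S := by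
    rw [gradedSubring, hU, Subring.closure_eq]
  rw [this]; rfl

/-- The homogeneous pieces as submodules over the base subring. -/
private def auxPiece (hA : IsStronglyGraded 𝒜) (g : Γ) : Submodule (gradedSubring 𝒜 ⊥) A :=
  { carrier := 𝒜 g
    add_mem' := fun ha hb => add_mem ha hb
    zero_mem' := zero_mem _
    smul_mem' := fun r x hx => by
      have hr : (r : A) ∈ 𝒜 1 := (aux_mem_base hA).mp r.2
      show (r : A) * x ∈ 𝒜 g
      simpa using hA.mul_mem hr hx }

private def auxSupSubmodule (hA : IsStronglyGraded 𝒜) (s : Set Γ) :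
    Submodule (gradedSubring 𝒜 ⊥) A :=
  { carrier := (⨆ h ∈ s, 𝒜 h : AddSubgroup A)
    add_mem' := fun ha hb => add_mem ha hb
    zero_mem' := zero_mem _
    smul_mem' := fun r x hx => by
      have hr : (r : A) ∈ 𝒜 1 := (aux_mem_base hA).mp r.2
      show (r : A) * x ∈ (⨆ h ∈ s, 𝒜 h : AddSubgroup A)
      have hle : (⨆ h ∈ s, 𝒜 h : AddSubgroup A) ≤
          AddSubgroup.comap (AddMonoidHom.mulLeft (r : A)) (⨆ h ∈ s, 𝒜 h) := by
        refine iSup₂_le fun h hs => fun y hy => ?_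
        have : (r : A) * y ∈ 𝒜 h := by simpa using hA.mul_mem hr hy
        exact AddSubgroup.mem_comap.mpr (le_iSup₂ (f := fun h (_ : h ∈ s) => 𝒜 h) h hs this)
      exact hle hx }

private lemma aux_internal (hA : IsStronglyGraded 𝒜) [DecidableEq Γ] :
    DirectSum.IsInternal (auxPiece hA) := by
  apply DirectSum.isInternal_submodule_of_iSupIndep_of_iSup_eq_top
  · intro g
    rw [disjoint_iff, Submodule.eq_bot_iff]
    rintro x ⟨hx1, hx2⟩
    have hle : (⨆ h, ⨆ _ : h ≠ g, auxPiece hA h) ≤ auxSupSubmodule hA {h | h ≠ g} := by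
      refine iSup₂_le fun h hne => fun y hy => ?_
      exact (le_iSup₂ (f := fun h (_ : h ∈ {h | h ≠ g}) => 𝒜 h) h hne : 𝒜 h ≤ _) hy
    have hx2' : x ∈ (⨆ h, ⨆ _ : h ≠ g, 𝒜 h : AddSubgroup A) := hle hx2
    exact AddSubgroup.disjoint_def.mp (hA.independent g) hx1 hx2'
  · rw [eq_top_iff]
    intro x _
    have hle : (⨆ g, 𝒜 g) ≤ (⨆ g, auxPiece hA g).toAddSubgroup := by
      refine iSup_le fun g y hy => ?_
      exact Submodule.mem_iSup_of_mem g hy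
    exact hle (by rw [hA.iSup_eq_top]; trivial)

end Aux

section Aux2

variable {Γ : Type*} [Group Γ] {A : Type*} [Ring A] {𝒜 : Γ → AddSubgroup A}

private noncomputable def auxEquiv (hA : IsStronglyGraded 𝒜) [DecidableEq Γ] :
    (DirectSum Γ fun g => auxPiece hA g) ≃ₗ[gradedSubring 𝒜 ⊥] A :=
  LinearEquiv.ofBijective (DirectSum.coeLinearMap (auxPiece hA)) (aux_internal hA)

private noncomputable def auxProj (hA : IsStronglyGraded 𝒜) [DecidableEq Γ] (g : Γ) :
    A →ₗ[gradedSubring 𝒜 ⊥] auxPiece hA g :=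
  (DirectSum.component (gradedSubring 𝒜 ⊥) Γ (fun g => auxPiece hA g) g) ∘ₗ ((auxEquiv hA).symm : A →ₗ[gradedSubring 𝒜 ⊥] _)

private lemma aux_proj_mem (hA : IsStronglyGraded 𝒜) [DecidableEq Γ] (g : Γ) (x : A) :
    (auxProj hA g x : A) ∈ 𝒜 g := (auxProj hA g x).2

private lemma aux_sum_proj (hA : IsStronglyGraded 𝒜) [DecidableEq Γ] [Fintype Γ] (x : A) :
    ∑ g, (auxProj hA g x : A) = x := by
  have hz : ∑ g, DirectSum.of (fun g => auxPiece hA g) g (((auxEquiv hA).symm x) g) = (auxEquiv hA).symm x :=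
    DirectSum.sum_univ_of _
  calc ∑ g, (auxProj hA g x : A)
      = ∑ g, DirectSum.coeLinearMap (auxPiece hA)
          (DirectSum.of (fun g => auxPiece hA g) g (((auxEquiv hA).symm x) g)) := by
        refine Finset.sum_congr rfl fun g _ => ?_
        rw [DirectSum.coeLinearMap_of]
        simp only [auxProj, LinearMap.comp_apply, LinearEquiv.coe_coe,
          ← DirectSum.apply_eq_component]
    _ = DirectSum.coeLinearMap (auxPiece hA) ((auxEquiv hA).symm x) := by rw [← map_sum, hz]
    _ = x := (auxEquiv hA).apply_symm_apply x

end Aux2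
section Aux3

variable {Γ : Type*} [Group Γ] {A : Type*} [Ring A] {𝒜 : Γ → AddSubgroup A}

private lemma aux_base_smul_def (r : gradedSubring 𝒜 ⊥) (x : A) : r • x = (r : A) * x := rfl

private lemma aux_projective_base (hA : IsStronglyGraded 𝒜) [DecidableEq Γ] [Fintype Γ] :
    Module.Projective (gradedSubring 𝒜 ⊥) A := by
  have key : ∀ g : Γ, ∃ n, ∃ c d : Fin n → A,
      (∀ i, c i ∈ 𝒜 g) ∧ (∀ i, d i ∈ 𝒜 g⁻¹) ∧ ∑ i, c i * d i = 1 := fun g =>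
    aux_mem_closure_mul (hA.strong g g⁻¹ (by simpa using hA.one_mem))
  choose n c d hc hd hsum using key
  have hmem : ∀ (p : Σ g : Γ, Fin (n g)) (x : A),
      (auxProj hA p.1⁻¹ x : A) * c p.1 p.2 ∈ gradedSubring 𝒜 ⊥ := fun p x =>
    (aux_mem_base hA).mpr (by simpa using hA.mul_mem (aux_proj_mem hA p.1⁻¹ x) (hc p.1 p.2))
  refine aux_projective_of_dualBasis (ι := Σ g : Γ, Fin (n g)) (fun p => d p.1 p.2)
    (fun p =>
      { toFun := fun x => ⟨(auxProj hA p.1⁻¹ x : A) * c p.1 p.2, hmem p x⟩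
        map_add' := fun x y => Subtype.ext (by
          show ((auxProj hA p.1⁻¹ (x + y) : A)) * _ = _ * _ + _ * _
          rw [map_add]
          push_cast
          rw [add_mul])
        map_smul' := fun r x => Subtype.ext (by
          show ((auxProj hA p.1⁻¹ (r • x) : A)) * _ = (r : A) * (_ * _)
          rw [map_smul]
          show ((r • (auxProj hA p.1⁻¹ x : A))) * _ = _
          rw [aux_base_smul_def, mul_assoc]) }) ?_
  intro x
  rw [← Finset.univ_sigma_univ, Finset.sum_sigma]
  calc ∑ g : Γ, ∑ i : Fin (n g),
        (⟨(auxProj hA g⁻¹ x : A) * c g i, hmem ⟨g, i⟩ x⟩ : gradedSubring 𝒜 ⊥) • d g i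
      = ∑ g : Γ, (auxProj hA g⁻¹ x : A) * ∑ i : Fin (n g), c g i * d g i := by
        refine Finset.sum_congr rfl fun g _ => ?_
        rw [Finset.mul_sum]
        exact Finset.sum_congr rfl fun i _ => by
          rw [aux_base_smul_def, mul_assoc]
    _ = ∑ g : Γ, (auxProj hA g⁻¹ x : A) := by
        refine Finset.sum_congr rfl fun g _ => ?_
        rw [hsum, mul_one]
    _ = ∑ g : Γ, (auxProj hA g x : A) :=
        Fintype.sum_equiv (Equiv.inv Γ) _ _ (fun g => rfl)
    _ = x := aux_sum_proj hA x

end Aux3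


/-- **Theorem 2.5 (Maschke, for strongly graded rings).**  Let `R` be a ring and `Γ` a finite
group whose order is invertible in `R`.  Let `A` be a strongly `Γ`-graded ring with base ring
`R` and `M` an `A`-module.  Then `M` is projective over `A` if and only if `M` is projective
over `R`, i.e. over the base subring `A_e = A({e})`. -/
theorem maschke_projective_iff_projective_over_base.{u, v} {Γ : Type*} [Group Γ]
    [Fintype Γ] (R : Type*) [Ring R] (hord : IsUnit ((Fintype.card Γ : R)))
    (A : Type u) [Ring A] (𝒜 : Γ → AddSubgroup A) (hA : IsStronglyGraded 𝒜)
    (hbase : Nonempty (R ≃+* gradedSubring 𝒜 ⊥))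
    (M : Type v) [AddCommGroup M] [Module A M] :
    Module.Projective A M ↔ Module.Projective (gradedSubring 𝒜 ⊥) M := by
  classical
  set R₀ := gradedSubring 𝒜 ⊥ with hR₀
  constructor
  · intro hP
    have pA : Module.Projective R₀ A := aux_projective_base hA
    haveI pF : Module.Projective R₀ (M →₀ A) := aux_projective_finsupp M
    obtain ⟨s, hs⟩ := Module.projective_def.mp hP
    exact Module.Projective.of_split (LinearMap.restrictScalars R₀ s)
      (LinearMap.restrictScalars R₀ (Finsupp.linearCombination A id))
      (LinearMap.ext fun m => hs m)
  · intro hM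
    have key : ∀ g : Γ, ∃ n, ∃ c d : Fin n → A,
        (∀ i, c i ∈ 𝒜 g) ∧ (∀ i, d i ∈ 𝒜 g⁻¹) ∧ ∑ i, c i * d i = 1 := fun g =>
      aux_mem_closure_mul (hA.strong g g⁻¹ (by simpa using hA.one_mem))
    choose n c d hc hd hsum using key
    let ρ : (M →₀ A) →ₗ[A] M := Finsupp.linearCombination A id
    have hρsurj : Function.Surjective (ρ.restrictScalars R₀) := fun m =>
      ⟨Finsupp.single m 1, by simp [ρ]⟩
    obtain ⟨σ, hσ⟩ := Module.projective_lifting_property (ρ.restrictScalars R₀)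
      (LinearMap.id) hρsurj
    have hρσ : ∀ x : M, ρ (σ x) = x := fun x => by
      have := LinearMap.ext_iff.mp hσ x
      simpa using this
    have hσR : ∀ (r : A), r ∈ 𝒜 1 → ∀ x : M, σ (r • x) = r • σ x := fun r hr x => by
      have h2 : σ ((⟨r, (aux_mem_base hA).mpr hr⟩ : R₀) • x)
          = (⟨r, (aux_mem_base hA).mpr hr⟩ : R₀) • σ x := map_smul σ _ x
      exact h2
    let Th : M →+ (M →₀ A) := AddMonoidHom.mk'
      (fun m => ∑ g : Γ, ∑ i : Fin (n g), c g i • σ (d g i • m))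
      (by intro a b
          simp only [smul_add, map_add, Finset.sum_add_distrib])
    have hThom : ∀ (h : Γ) (a : A), a ∈ 𝒜 h → ∀ m : M, Th (a • m) = a • Th m := by
      intro h a ha m
      have hkey : ∀ (g : Γ) (i : Fin (n g)),
          σ ((d g i * a) • m) = ∑ j : Fin (n (h⁻¹ * g)),
            (d g i * a * c (h⁻¹ * g) j) • σ (d (h⁻¹ * g) j • m) := by
        intro g i
        have hda : d g i * a
            = ∑ j : Fin (n (h⁻¹ * g)), (d g i * a * c (h⁻¹ * g) j) * d (h⁻¹ * g) j := by
          conv_lhs => rw [← mul_one (d g i * a)]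
          rw [← hsum (h⁻¹ * g), Finset.mul_sum]
          exact Finset.sum_congr rfl fun j _ => by simp only [mul_assoc]
        calc σ ((d g i * a) • m)
            = ∑ j : Fin (n (h⁻¹ * g)),
                σ (((d g i * a * c (h⁻¹ * g) j) * d (h⁻¹ * g) j) • m) := by
              rw [← map_sum, ← Finset.sum_smul, ← hda]
          _ = ∑ j : Fin (n (h⁻¹ * g)),
                (d g i * a * c (h⁻¹ * g) j) • σ (d (h⁻¹ * g) j • m) := by
              refine Finset.sum_congr rfl fun j _ => ?_
              rw [mul_smul]
              refine hσR _ ?_ _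
              have h9 := hA.mul_mem (hA.mul_mem (hd g i) ha) (hc (h⁻¹ * g) j)
              have h10 : g⁻¹ * h * (h⁻¹ * g) = 1 := by group
              rw [h10] at h9
              exact h9
      calc Th (a • m)
          = ∑ g : Γ, ∑ i : Fin (n g), c g i • σ ((d g i * a) • m) := by
            show (∑ g : Γ, ∑ i : Fin (n g), c g i • σ (d g i • a • m)) = _
            simp only [← mul_smul]
        _ = ∑ g : Γ, ∑ j : Fin (n (h⁻¹ * g)),
              (a * c (h⁻¹ * g) j) • σ (d (h⁻¹ * g) j • m) := by
            refine Finset.sum_congr rfl fun g _ => ?_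
            calc ∑ i : Fin (n g), c g i • σ ((d g i * a) • m)
                = ∑ i : Fin (n g), ∑ j : Fin (n (h⁻¹ * g)),
                    (c g i * (d g i * a * c (h⁻¹ * g) j)) • σ (d (h⁻¹ * g) j • m) := by
                  refine Finset.sum_congr rfl fun i _ => ?_
                  rw [hkey g i, Finset.smul_sum]
                  exact Finset.sum_congr rfl fun j _ => by rw [smul_smul]
              _ = ∑ j : Fin (n (h⁻¹ * g)), ∑ i : Fin (n g),
                    ((c g i * d g i) * (a * c (h⁻¹ * g) j)) • σ (d (h⁻¹ * g) j • m) := by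
                  rw [Finset.sum_comm]
                  exact Finset.sum_congr rfl fun j _ => Finset.sum_congr rfl fun i _ => by
                    simp only [mul_assoc]
              _ = ∑ j : Fin (n (h⁻¹ * g)),
                    (a * c (h⁻¹ * g) j) • σ (d (h⁻¹ * g) j • m) := by
                  refine Finset.sum_congr rfl fun j _ => ?_
                  rw [← Finset.sum_smul, ← Finset.sum_mul, hsum g, one_mul]
        _ = ∑ g : Γ, ∑ j : Fin (n g), (a * c g j) • σ (d g j • m) :=
            Fintype.sum_equiv (Equiv.mulLeft h⁻¹) _ _ (fun g => rfl)
        _ = a • Th m := by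
            show _ = a • ∑ g : Γ, ∑ i : Fin (n g), c g i • σ (d g i • m)
            rw [Finset.smul_sum]
            exact Finset.sum_congr rfl fun g _ => by
              rw [Finset.smul_sum]
              exact Finset.sum_congr rfl fun i _ => by rw [smul_smul]
    have hTsmul : ∀ (a : A) (m : M), Th (a • m) = a • Th m := by
      intro a m
      have hx := aux_sum_proj hA a
      calc Th (a • m) = Th ((∑ g, (auxProj hA g a : A)) • m) := by rw [hx]
        _ = ∑ g, Th ((auxProj hA g a : A) • m) := by
            rw [Finset.sum_smul, map_sum]
        _ = ∑ g, (auxProj hA g a : A) • Th m :=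
            Finset.sum_congr rfl fun g _ => hThom g _ (aux_proj_mem hA g a) m
        _ = a • Th m := by rw [← Finset.sum_smul, hx]
    have hρT : ∀ m : M, ρ (Th m) = (Fintype.card Γ) • m := by
      intro m
      calc ρ (Th m) = ∑ g : Γ, ∑ i : Fin (n g), c g i • ρ (σ (d g i • m)) := by
            show ρ (∑ g : Γ, ∑ i : Fin (n g), c g i • σ (d g i • m)) = _
            rw [map_sum]
            exact Finset.sum_congr rfl fun g _ => by
              rw [map_sum]
              exact Finset.sum_congr rfl fun i _ => by rw [map_smul]
        _ = ∑ g : Γ, ∑ i : Fin (n g), (c g i * d g i) • m := by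
            refine Finset.sum_congr rfl fun g _ => Finset.sum_congr rfl fun i _ => ?_
            rw [hρσ, mul_smul]
        _ = ∑ g : Γ, (1 : A) • m := by
            refine Finset.sum_congr rfl fun g _ => ?_
            rw [← Finset.sum_smul, hsum g]
        _ = (Fintype.card Γ) • m := by
            rw [one_smul, Finset.sum_const, Finset.card_univ]
    obtain ⟨e⟩ := hbase
    have h1 : IsUnit ((Fintype.card Γ : R₀)) := by
      have := hord.map (e : R ≃+* R₀)
      simpa using this
    have h2 : IsUnit ((Fintype.card Γ : A)) := by
      have := h1.map (R₀.subtype)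
      simpa using this
    obtain ⟨u, hu⟩ := h2
    have hcomm : ∀ a : A, (↑u⁻¹ : A) * a = a * ↑u⁻¹ := fun a => by
      have hcu : Commute (↑u : A) a := by rw [hu]; exact Nat.cast_commute _ a
      exact (Commute.units_inv_left hcu).eq
    let TL : M →ₗ[A] (M →₀ A) :=
      { toFun := fun m => Th ((↑u⁻¹ : A) • m)
        map_add' := fun x y => by simp only [smul_add, map_add]
        map_smul' := fun a x => by
          simp only [RingHom.id_apply]
          rw [← mul_smul, hcomm a, mul_smul, hTsmul] }
    refine Module.Projective.of_split TL ρ (LinearMap.ext fun m => ?_)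
    show ρ (Th ((↑u⁻¹ : A) • m)) = m
    rw [hρT, ← Nat.cast_smul_eq_nsmul A, ← mul_smul, ← hu, u.mul_inv, one_smul]
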